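/- arXiv:1903.08625 — 3 statements merged into one kernel-verified Lean document; each statement's English description precedes it below -/
import Mathlib

section
/- Quasi Solovay reducibility is a preorder on the real numbers: for every real α one has α ≤_qS α, and for all reals α, β, γ, if α ≤_qS β and β ≤_qS γ then α ≤_qS γ. -/
open Filter Topology

/-- `a` is a computable nondecreasing sequence of rationals converging to the real `x`. -/
def CompApproxSeq (x : ℝ) (a : ℕ → ℚ) : Prop :=
  Computable a ∧ Monotone a ∧ Filter.Tendsto (fun n => (a n : ℝ)) Filter.atTop (nhds x)

/-- A real number is left-c.e. if it has a computable nondecreasing sequence of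
rationals converging to it (equivalently, its left cut is c.e.). -/
def LeftCE (x : ℝ) : Prop := ∃ a : ℕ → ℚ, CompApproxSeq x a

/-- Solovay reducibility: there are a partial computable `f : ℚ →. ℚ` and a positive
integer `d` such that for every rational `q < β`, `f q` is defined, `f q < α`, and
`α - f q < d * (β - q)`. -/
def SRed (α β : ℝ) : Prop :=
  ∃ f : ℚ →. ℚ, Partrec f ∧ ∃ d : ℕ, 0 < d ∧
    ∀ q : ℚ, (q : ℝ) < β → ∃ y ∈ f q, (y : ℝ) < α ∧ α - (y : ℝ) < (d : ℝ) * (β - (q : ℝ))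

/-- Quasi Solovay reducibility: there are a partial computable `f : ℚ →. ℚ` and positive
integers `d, l` such that for every rational `q < β`, `f q` is defined, `f q < α`, and
`(α - f q) ^ l < d * (β - q)`. -/
def QSRed (α β : ℝ) : Prop :=
  ∃ f : ℚ →. ℚ, Partrec f ∧ ∃ d l : ℕ, 0 < d ∧ 0 < l ∧
    ∀ q : ℚ, (q : ℝ) < β → ∃ y ∈ f q, (y : ℝ) < α ∧
      (α - (y : ℝ)) ^ l < (d : ℝ) * (β - (q : ℝ))

theorem QSRed.refl (α : ℝ) : QSRed α α := by
  refine ⟨fun q => Part.some q, Computable.id.partrec, 2, 1, two_pos, one_pos, fun q hq => ?_⟩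
  refine ⟨q, Part.mem_some q, hq, ?_⟩
  push_cast
  linarith

/-- If `f` and `g` witness `α ≤_qS β` and `β ≤_qS γ` with constants `(d, l)` and `(e, m)`, then
`f ∘ g` witnesses `α ≤_qS γ` with `(d ^ m * e, l * m)`: raise the first inequality to the `m`-th
power and bound `(β - g q) ^ m` by the second. -/
theorem QSRed.trans {α β γ : ℝ} (hαβ : QSRed α β) (hβγ : QSRed β γ) : QSRed α γ := by
  obtain ⟨f, hf, d, l, hd, hl, hfβ⟩ := hαβ
  obtain ⟨g, hg, e, m, he, hm, hgγ⟩ := hβγ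
  refine ⟨fun q => (g q).bind f, hg.bind (hf.comp Computable.snd), d ^ m * e, l * m,
    Nat.mul_pos (Nat.pow_pos hd) he, Nat.mul_pos hl hm, fun q hq => ?_⟩
  obtain ⟨y, hy, hyβ, hyγ⟩ := hgγ q hq
  obtain ⟨z, hz, hzα, hzβ⟩ := hfβ y hyβ
  refine ⟨z, Part.mem_bind_iff.mpr ⟨y, hy, hz⟩, hzα, ?_⟩
  calc (α - z) ^ (l * m) = ((α - z) ^ l) ^ m := pow_mul _ _ _
    _ < ((d : ℝ) * (β - y)) ^ m := pow_lt_pow_left₀ hzβ (by positivity) hm.ne'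
    _ = (d : ℝ) ^ m * (β - y) ^ m := mul_pow _ _ _
    _ < (d : ℝ) ^ m * (e * (γ - q)) := mul_lt_mul_of_pos_left hyγ (by positivity)
    _ = ((d ^ m * e : ℕ) : ℝ) * (γ - q) := by push_cast; ring

/-- Quasi Solovay reducibility is a preorder on the reals: it is reflexive and
transitive. -/
theorem stmt1 :
    (∀ α : ℝ, QSRed α α) ∧ (∀ α β γ : ℝ, QSRed α β → QSRed β γ → QSRed α γ) :=
  ⟨QSRed.refl, fun _ _ _ => QSRed.trans⟩
end

section
/- Let k be a natural number and let q = Σ_{i=1}^{2k} q_i·2^{-i}, where each q_i ∈ {0,1} and q_{2i} = 1 − q_{2i−1} for every i with 1 ≤ i ≤ k; extend the digits by setting q_i := 0 for all i > 2k. Let β be an irrational real with binary expansion β = Σ_{i≥1} b_i·2^{-i}, where each b_i ∈ {0,1} and b_{2i} = 1 − b_{2i−1} for every i ≥ 1. If q < β and β − q ≤ 2^{-(2m+1)} for a natural number m, then b_i = q_i for every i with 1 ≤ i ≤ 2m. -/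
/-!
Let `n + 1` be the first position where the digits of `β` and `q` differ. As `q < β`, there
`b = 1` and `q = 0`. If `n ≥ 2k`, all later digits of `q` vanish and `β - q ≥ 2^{-(n+1)} ≥ 2^{-2m}`.
Otherwise an even position is determined by its odd partner in both expansions, so `n = 2t`,
`q_{2t+2} = 1` and `b_{2t+2} = 0`. The later pairs of `q` contribute at most `3/4 · 2^{-(2t+2)}`,
the later pairs of `β` strictly more than `1/4 · 2^{-(2t+2)}`, hence
`β - q > 2^{-(2t+3)} ≥ 2^{-(2m+1)}`.
-/

open Finset

noncomputable def binaryTail (d : ℕ → ℕ) (n : ℕ) : ℝ :=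
  ∑' i, (d (i + n + 1) : ℝ) / 2 ^ (i + n + 1)

section

variable {d e : ℕ → ℕ}

lemma div_two_pow_add (a : ℝ) (n k : ℕ) : a / 2 ^ (n + k) = a / 2 ^ n / 2 ^ k := by
  rw [pow_add, div_div]

lemma binaryTail_term_le (hd : ∀ i, d i ≤ 1) (n i : ℕ) :
    (d (i + n + 1) : ℝ) / 2 ^ (i + n + 1) ≤ 1 / 2 ^ n / 2 / 2 ^ i := by
  have hdi : (d (i + n + 1) : ℝ) ≤ 1 := by exact_mod_cast hd _
  calc (d (i + n + 1) : ℝ) / 2 ^ (i + n + 1) ≤ 1 / 2 ^ (n + 1 + i) := by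
        rw [show n + 1 + i = i + n + 1 by ring]; gcongr
    _ = 1 / 2 ^ n / 2 / 2 ^ i := by rw [div_two_pow_add, div_two_pow_add, pow_one]

lemma summable_binaryTail (hd : ∀ i, d i ≤ 1) (n : ℕ) :
    Summable fun i => (d (i + n + 1) : ℝ) / 2 ^ (i + n + 1) :=
  (summable_geometric_two' _).of_nonneg_of_le (fun _ => by positivity) (binaryTail_term_le hd n)

lemma binaryTail_nonneg (d : ℕ → ℕ) (n : ℕ) : 0 ≤ binaryTail d n :=
  tsum_nonneg fun _ => by positivity

lemma binaryTail_le (hd : ∀ i, d i ≤ 1) (n : ℕ) : binaryTail d n ≤ 1 / 2 ^ n :=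
  calc binaryTail d n ≤ ∑' i, 1 / 2 ^ n / 2 / 2 ^ i :=
        (summable_binaryTail hd n).tsum_le_tsum (binaryTail_term_le hd n) (summable_geometric_two' _)
    _ = 1 / 2 ^ n := tsum_geometric_two' _

lemma binaryTail_eq_add (hd : ∀ i, d i ≤ 1) (n : ℕ) :
    binaryTail d n = d (n + 1) / 2 ^ (n + 1) + binaryTail d (n + 1) := by
  rw [binaryTail, (summable_binaryTail hd n).tsum_eq_zero_add, binaryTail, zero_add]
  congr 1
  exact tsum_congr fun i => by rw [show i + 1 + n + 1 = i + (n + 1) + 1 by ring]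

lemma binaryTail_zero_eq_sum_add (hd : ∀ i, d i ≤ 1) (n : ℕ) :
    binaryTail d 0 = ∑ i ∈ Icc 1 n, (d i : ℝ) / 2 ^ i + binaryTail d n := by
  induction n with
  | zero => simp
  | succ n ih => rw [ih, binaryTail_eq_add hd n, sum_Icc_succ_top (by omega), add_assoc]

lemma binaryTail_eq_zero {N n : ℕ} (hd : ∀ i, N < i → d i = 0) (hn : N ≤ n) :
    binaryTail d n = 0 := by
  refine (tsum_congr fun i => ?_).trans tsum_zero
  rw [hd _ (by omega), Nat.cast_zero, zero_div]

lemma binaryTail_sub_binaryTail_eq (hd : ∀ i, d i ≤ 1) (he : ∀ i, e i ≤ 1) {n : ℕ}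
    (h : ∀ i, 1 ≤ i → i ≤ n → d i = e i) :
    binaryTail d 0 - binaryTail e 0 = binaryTail d n - binaryTail e n := by
  have hsum : ∑ i ∈ Icc 1 n, (d i : ℝ) / 2 ^ i = ∑ i ∈ Icc 1 n, (e i : ℝ) / 2 ^ i :=
    sum_congr rfl fun i hi => by rw [h i (mem_Icc.1 hi).1 (mem_Icc.1 hi).2]
  rw [binaryTail_zero_eq_sum_add hd n, binaryTail_zero_eq_sum_add he n, hsum]
  ring

lemma binaryTail_eq_add_add (hd : ∀ i, d i ≤ 1) (n : ℕ) :
    binaryTail d n =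
      d (n + 1) / 2 ^ (n + 1) + d (n + 2) / 2 ^ (n + 2) + binaryTail d (n + 2) := by
  rw [binaryTail_eq_add hd n, binaryTail_eq_add hd (n + 1)]
  ring

lemma two_digits_eq (a c n : ℕ) :
    (a : ℝ) / 2 ^ (n + 1) + c / 2 ^ (n + 2) = (2 * a + c : ℕ) / 2 ^ n / 4 := by
  push_cast
  rw [pow_succ, pow_succ, pow_succ]
  field_simp
  ring

lemma two_digits_le {a c : ℕ} (h : a + c ≤ 1) (n : ℕ) :
    (a : ℝ) / 2 ^ (n + 1) + c / 2 ^ (n + 2) ≤ 1 / 2 ^ n / 2 := by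
  rw [two_digits_eq]
  calc ((2 * a + c : ℕ) : ℝ) / 2 ^ n / 4 ≤ (2 : ℕ) / 2 ^ n / 4 := by gcongr; omega
    _ = 1 / 2 ^ n / 2 := by push_cast; ring

lemma le_two_digits {a c : ℕ} (h : a + c = 1) (n : ℕ) :
    1 / 2 ^ n / 4 ≤ (a : ℝ) / 2 ^ (n + 1) + c / 2 ^ (n + 2) := by
  rw [two_digits_eq]
  calc 1 / 2 ^ n / 4 = ((1 : ℕ) : ℝ) / 2 ^ n / 4 := by push_cast; ring
    _ ≤ _ := by gcongr; omega

lemma binaryTail_le_of_pair_le_one (hd : ∀ i, d i ≤ 1) {n : ℕ} (h : d (n + 1) + d (n + 2) ≤ 1) :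
    binaryTail d n ≤ 1 / 2 ^ n * (3 / 4) := by
  have hpair := two_digits_le h n
  have htail : binaryTail d (n + 2) ≤ 1 / 2 ^ n / 4 :=
    (binaryTail_le hd (n + 2)).trans_eq (by rw [div_two_pow_add]; norm_num)
  rw [binaryTail_eq_add_add hd]
  linarith

lemma div_four_lt_binaryTail_two_mul (hd : ∀ i, d i ≤ 1)
    (hpair : ∀ i, d (2 * i + 1) + d (2 * i + 2) = 1) (t : ℕ) :
    1 / 2 ^ (2 * t) / 4 < binaryTail d (2 * t) := by
  have hnext : 0 < binaryTail d (2 * t + 2) := by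
    have h := le_two_digits (hpair (t + 1)) (2 * (t + 1))
    rw [binaryTail_eq_add_add hd, ← mul_add_one]
    linarith [binaryTail_nonneg d (2 * (t + 1) + 2),
      show (0 : ℝ) < 1 / 2 ^ (2 * (t + 1)) / 4 by positivity]
  rw [binaryTail_eq_add_add hd]
  linarith [le_two_digits (hpair t) (2 * t)]

lemma binaryTail_le_binaryTail_of_lt (hd : ∀ i, d i ≤ 1) (he : ∀ i, e i ≤ 1) {n : ℕ}
    (h : d (n + 1) < e (n + 1)) : binaryTail d n ≤ binaryTail e n := by
  have hd0 : d (n + 1) = 0 := by have := he (n + 1); omega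
  have he1 : e (n + 1) = 1 := by have := he (n + 1); omega
  have := binaryTail_le hd (n + 1)
  have := binaryTail_nonneg e (n + 1)
  rw [binaryTail_eq_add hd, binaryTail_eq_add he, hd0, he1, Nat.cast_zero, Nat.cast_one, zero_div]
  linarith

lemma one_div_two_pow_le_binaryTail (hd : ∀ i, d i ≤ 1) {n : ℕ} (h : d (n + 1) = 1) :
    1 / 2 ^ (n + 1) ≤ binaryTail d n := by
  rw [binaryTail_eq_add hd, h, Nat.cast_one]
  linarith [binaryTail_nonneg d (n + 1)]

lemma one_div_two_pow_lt_binaryTail_sub (hd : ∀ i, d i ≤ 1) (he : ∀ i, e i ≤ 1)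
    (hdpair : ∀ i, d (2 * i + 1) + d (2 * i + 2) = 1)
    (hepair : ∀ i, e (2 * i + 1) + e (2 * i + 2) ≤ 1) {t : ℕ}
    (hd1 : d (2 * t + 1) = 1) (he2 : e (2 * t + 2) = 1) :
    1 / 2 ^ (2 * t + 3) < binaryTail d (2 * t) - binaryTail e (2 * t) := by
  have hd2 : d (2 * t + 2) = 0 := by have := hdpair t; omega
  have he1 : e (2 * t + 1) = 0 := by have := hepair t; omega
  have hdnext := div_four_lt_binaryTail_two_mul hd hdpair (t + 1)
  have henext := binaryTail_le_of_pair_le_one he (hepair (t + 1))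
  rw [mul_add, mul_one, div_two_pow_add _ _ 2] at hdnext henext
  rw [binaryTail_eq_add_add hd, binaryTail_eq_add_add he, hd1, hd2, he1, he2]
  simp only [Nat.cast_one, Nat.cast_zero, zero_div, div_two_pow_add 1 (2 * t)]
  norm_num at hdnext henext ⊢
  linarith

end

lemma digit_eq_of_binaryTail_sub_le {k m n : ℕ} {q b : ℕ → ℕ} (hq01 : ∀ i, q i ≤ 1)
    (hqpair : ∀ i < k, q (2 * i + 1) + q (2 * i + 2) = 1) (hqzero : ∀ i, 2 * k < i → q i = 0)
    (hb01 : ∀ i, b i ≤ 1) (hbpair : ∀ i, b (2 * i + 1) + b (2 * i + 2) = 1)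
    (hagree : ∀ i, 1 ≤ i → i ≤ n → b i = q i) (hn : n < 2 * m)
    (hlt : binaryTail q n < binaryTail b n)
    (hdist : binaryTail b n - binaryTail q n ≤ 1 / 2 ^ (2 * m + 1)) :
    b (n + 1) = q (n + 1) := by
  by_contra hne
  have hqb : q (n + 1) < b (n + 1) := by
    by_contra! hbq
    linarith [binaryTail_le_binaryTail_of_lt hb01 hq01 (lt_of_le_of_ne hbq hne)]
  have hb1 : b (n + 1) = 1 := by have := hb01 (n + 1); omega
  have hq0 : q (n + 1) = 0 := by omega
  rcases le_or_gt (2 * k) n with hkn | hnk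
  · have hm : (1 : ℝ) / 2 ^ (2 * m) ≤ 1 / 2 ^ (n + 1) :=
      one_div_pow_le_one_div_pow_of_le one_le_two (by omega)
    rw [binaryTail_eq_zero hqzero hkn, div_two_pow_add 1 _ 1, pow_one] at hdist
    linarith [one_div_two_pow_le_binaryTail hb01 hb1,
      show (0 : ℝ) < 1 / 2 ^ (2 * m) by positivity]
  · obtain ⟨t, rfl⟩ : ∃ t, n = 2 * t := by
      rcases Nat.even_or_odd' n with ⟨t, rfl | rfl⟩
      · exact ⟨t, rfl⟩
      · have hb2 : b (2 * t + 2) = 1 := hb1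
        have hq2 : q (2 * t + 2) = 0 := hq0
        have := hagree (2 * t + 1) (by omega) le_rfl
        have := hbpair t
        have := hqpair t (by omega)
        omega
    have hq2 : q (2 * t + 2) = 1 := by have := hqpair t (by omega); omega
    have hqpair_le : ∀ i, q (2 * i + 1) + q (2 * i + 2) ≤ 1 := fun i => by
      rcases lt_or_ge i k with hik | hik
      · exact (hqpair i hik).le
      · have := hqzero (2 * i + 1) (by omega)
        have := hqzero (2 * i + 2) (by omega)
        omega
    have hm : (1 : ℝ) / 2 ^ (2 * m + 1) ≤ 1 / 2 ^ (2 * t + 3) :=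
      one_div_pow_le_one_div_pow_of_le one_le_two (by omega)
    linarith [one_div_two_pow_lt_binaryTail_sub hb01 hq01 hbpair hqpair_le hb1 hq2]

theorem stmt5_general (k : ℕ) (qd : ℕ → ℕ) (hq01 : ∀ i, qd i ≤ 1)
    (hqpair : ∀ i < k, qd (2 * i + 1) + qd (2 * i + 2) = 1)
    (hqzero : ∀ i, 2 * k < i → qd i = 0)
    (b : ℕ → ℕ) (hb01 : ∀ i, b i ≤ 1)
    (hbpair : ∀ i : ℕ, b (2 * i + 1) + b (2 * i + 2) = 1)
    (β : ℝ) (hβ : β = ∑' i : ℕ, (b (i + 1) : ℝ) / 2 ^ (i + 1))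
    (q : ℝ) (hq : q = ∑ i ∈ Finset.Icc 1 (2 * k), (qd i : ℝ) / 2 ^ i)
    (m : ℕ) (hlt : q < β) (hdist : β - q ≤ 1 / 2 ^ (2 * m + 1)) :
    ∀ i, 1 ≤ i → i ≤ 2 * m → b i = qd i := by
  have hβ' : β = binaryTail b 0 := hβ
  have hq' : q = binaryTail qd 0 := by
    rw [hq, binaryTail_zero_eq_sum_add hq01 (2 * k), binaryTail_eq_zero hqzero le_rfl, add_zero]
  intro j
  induction j using Nat.strong_induction_on with
  | _ j ih =>
    intro hj1 hj2
    obtain ⟨n, rfl⟩ : ∃ n, j = n + 1 := ⟨j - 1, by omega⟩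
    have hagree : ∀ i, 1 ≤ i → i ≤ n → b i = qd i :=
      fun i hi1 hi2 => ih i (by omega) hi1 (by omega)
    have hsub := binaryTail_sub_binaryTail_eq hb01 hq01 hagree
    exact digit_eq_of_binaryTail_sub_le (m := m) hq01 hqpair hqzero hb01 hbpair hagree (by omega)
      (by linarith) (by linarith)

/-- Claim 1 of Lemma 3.3: if `q = Σ_{i=1}^{2k} qᵢ 2^{-i}` is a dyadic rational whose
digit pairs satisfy `q_{2i} = 1 - q_{2i-1}`, and `β` is an irrational real whose binary
digits satisfy `b_{2i} = 1 - b_{2i-1}` for all `i ≥ 1`, then `q < β` and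
`β - q ≤ 2^{-(2m+1)}` force the first `2m` digits of `β` and `q` to agree. -/
theorem stmt5 (k : ℕ) (qd : ℕ → ℕ) (hq01 : ∀ i, qd i ≤ 1)
    (hqpair : ∀ i < k, qd (2 * i + 1) + qd (2 * i + 2) = 1)
    (hqzero : ∀ i, 2 * k < i → qd i = 0)
    (b : ℕ → ℕ) (hb01 : ∀ i, b i ≤ 1)
    (hbpair : ∀ i : ℕ, b (2 * i + 1) + b (2 * i + 2) = 1)
    (β : ℝ) (hβ : β = ∑' i : ℕ, (b (i + 1) : ℝ) / 2 ^ (i + 1))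
    (hirr : Irrational β)
    (q : ℝ) (hq : q = ∑ i ∈ Finset.Icc 1 (2 * k), (qd i : ℝ) / 2 ^ i)
    (m : ℕ) (hlt : q < β) (hdist : β - q ≤ 1 / 2 ^ (2 * m + 1)) :
    ∀ i, 1 ≤ i → i ≤ 2 * m → b i = qd i :=
  stmt5_general k qd hq01 hqpair hqzero b hb01 hbpair β hβ q hq m hlt hdist
end

section
/- There exist left-c.e. real numbers α and β such that α ≤_qS β but not α ≤_S β. -/
open Filter Topology

/-!
Let `W` be the c.e. set of all odd numbers and all `2c` such that the code `c` halts on input `0`,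
enumerated in stages `W_s`, and let `α = ∑_{n ∈ W} 2⁻ⁿ`, `β = ∑_{n ∈ W} 4⁻ⁿ`, approximated from
below by the computable partial sums `α_s`, `β_s` over `W_s`. If `m` is the least element of `W`
enumerated after stage `s`, then `α - α_s` lies between `2⁻ᵐ` and `2 · 2⁻ᵐ`, and `β - β_s` between
`4⁻ᵐ` and `2 · 4⁻ᵐ`. Hence `(α - α_s)² ≤ 4 (β - β_s)`, which yields `α ≤_qS β` with exponent `2`
via `q ↦ α_s` for the first `s` with `q < β_s`. Conversely `β - β_s ≤ 2 (α - α_s)²`, so a Solovay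
reduction computably turns a stage `s` into a stage `t` with `α - α_t ≤ K (α - α_s)²`. Iterating
from a good stage gives a computable `S` with `α - α_{S n} < 2⁻ⁿ`, and then `n ∈ W ↔ n ∈ W_{S n}`
would decide the halting problem.
-/

open Encodable Finset

section NatArith

variable {α : Type*} [Primcodable α]

theorem Primrec.nat_dvd : PrimrecRel ((· ∣ ·) : ℕ → ℕ → Prop) :=
  (Primrec.eq.comp (Primrec.nat_mod.comp Primrec.snd Primrec.fst) (Primrec.const 0)).of_eq
    fun _ => Nat.dvd_iff_mod_eq_zero.symm

theorem Nat.findGreatest_dvd_dvd_eq_gcd (a b : ℕ) :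
    Nat.findGreatest (fun d => d ∣ a ∧ d ∣ b) (a + b) = Nat.gcd a b := by
  rw [Nat.findGreatest_eq_iff]
  refine ⟨?_, fun _ => ⟨Nat.gcd_dvd_left a b, Nat.gcd_dvd_right a b⟩, ?_⟩
  · rcases Nat.eq_zero_or_pos a with rfl | ha
    · simp
    · exact (Nat.gcd_le_left b ha).trans (Nat.le_add_right a b)
  · rintro k hk hkn ⟨hka, hkb⟩
    rcases Nat.eq_zero_or_pos (Nat.gcd a b) with h0 | hpos
    · rw [Nat.gcd_eq_zero_iff] at h0
      omega
    · exact hk.not_ge (Nat.le_of_dvd hpos (Nat.dvd_gcd hka hkb))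

theorem Primrec.nat_gcd : Primrec₂ Nat.gcd :=
  (Primrec.nat_findGreatest (p := fun (x : ℕ × ℕ) d => d ∣ x.1 ∧ d ∣ x.2) Primrec.nat_add
    ((Primrec.nat_dvd.comp Primrec.snd (Primrec.fst.comp Primrec.fst)).and
      (Primrec.nat_dvd.comp Primrec.snd (Primrec.snd.comp Primrec.fst)))).of_eq
    fun x => Nat.findGreatest_dvd_dvd_eq_gcd x.1 x.2

theorem Primrec.nat_sum_range {f : α → ℕ → ℕ} (hf : Primrec₂ f) :
    Primrec₂ fun a n => ∑ i ∈ range n, f a i :=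
  (Primrec.nat_rec (Primrec.const 0)
    (Primrec.nat_add.comp (Primrec.snd.comp Primrec.snd)
      (hf.comp Primrec.fst (Primrec.fst.comp Primrec.snd))).to₂).of_eq
    fun a n => by induction n with
      | zero => rfl
      | succ n ih => simp [Finset.sum_range_succ, ih, add_comm]

theorem Primrec.nat_count {p : ℕ → Prop} [DecidablePred p] (hp : PrimrecPred p) :
    Primrec (Nat.count p) :=
  ((Primrec.nat_sum_range (f := fun (_ : Unit) i => if p i then 1 else 0)
    (Primrec.ite (hp.comp Primrec.snd) (Primrec.const 1) (Primrec.const 0)).to₂).comp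
      (Primrec.const ()) Primrec.id).of_eq
    fun n => by simp only [id, Nat.count_eq_card_filter_range, Finset.card_filter]

theorem Primrec.int_toNat : Primrec Int.toNat :=
  (Primrec.ite (Primrec.eq.comp (Primrec.nat_mod.comp Primrec.encode (Primrec.const 2))
      (Primrec.const 0)) (Primrec.nat_div.comp Primrec.encode (Primrec.const 2))
      (Primrec.const 0)).of_eq
    fun z => by
      rcases z with k | k
      · show (if 2 * k % 2 = 0 then 2 * k / 2 else 0) = _
        simp
      · show (if (2 * k + 1) % 2 = 0 then (2 * k + 1) / 2 else 0) = _
        simp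

theorem Primrec.int_neg_toNat : Primrec fun z : ℤ => (-z).toNat :=
  (Primrec.ite (Primrec.eq.comp (Primrec.nat_mod.comp Primrec.encode (Primrec.const 2))
      (Primrec.const 0)) (Primrec.const 0)
      (Primrec.succ.comp (Primrec.nat_div.comp Primrec.encode (Primrec.const 2)))).of_eq
    fun z => by
      rcases z with k | k
      · show (if 2 * k % 2 = 0 then 0 else (2 * k) / 2 + 1) = _
        simp
      · show (if (2 * k + 1) % 2 = 0 then 0 else (2 * k + 1) / 2 + 1) = _
        rw [if_neg (by omega), Int.neg_negSucc, Int.toNat_natCast]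
        omega

theorem Primrec.nat_pow : Primrec₂ ((· ^ ·) : ℕ → ℕ → ℕ) :=
  Primrec₂.unpaired'.1 Nat.Primrec.pow

theorem Primrec.int_natCast : Primrec (Nat.cast : ℕ → ℤ) :=
  Primrec.encode_iff.1 (Primrec.nat_double.of_eq fun _ => rfl)

end NatArith

namespace Rat

variable {α : Type*} [Primcodable α]

/-- The range of `encode : ℚ → ℕ`, where `encode q = Nat.pair (encode q.num) q.den`. -/
def IsEncoding (n : ℕ) : Prop :=
  0 < n.unpair.2 ∧ (Denumerable.ofNat ℤ n.unpair.1).natAbs.Coprime n.unpair.2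

instance : DecidablePred IsEncoding := fun _ => inferInstanceAs (Decidable (_ ∧ _))

theorem isEncoding_iff (n : ℕ) : IsEncoding n ↔ ∃ q : ℚ, Nat.pair (encode q.num) q.den = n := by
  constructor
  · rintro ⟨hden, hcop⟩
    refine ⟨⟨Denumerable.ofNat ℤ n.unpair.1, n.unpair.2, hden.ne', hcop⟩, ?_⟩
    exact (congrArg₂ Nat.pair (Denumerable.encode_ofNat (α := ℤ) _) rfl).trans (Nat.pair_unpair n)
  · rintro ⟨q, rfl⟩
    simp only [IsEncoding, Nat.unpair_pair, Denumerable.ofNat_encode]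
    exact ⟨q.den_pos, q.reduced⟩

theorem primrecPred_isEncoding : PrimrecPred IsEncoding := by
  have hz : Primrec fun n : ℕ => Denumerable.ofNat ℤ n.unpair.1 :=
    (Primrec.ofNat ℤ).comp (Primrec.fst.comp Primrec.unpair)
  have hd : Primrec fun n : ℕ => n.unpair.2 := Primrec.snd.comp Primrec.unpair
  refine ((Primrec.nat_lt.comp (Primrec.const 0) hd).and
    (Primrec.eq.comp (Primrec.nat_gcd.comp
      (Primrec.nat_add.comp (Primrec.int_toNat.comp hz) (Primrec.int_neg_toNat.comp hz)) hd)
      (Primrec.const 1))).of_eq fun n => ?_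
  rw [Int.toNat_add_toNat_neg_eq_natAbs]
  rfl

/-- Pitfall: `Computable` on `ℚ` uses the `Primcodable` instance coming from `Denumerable ℚ`, not
the default instance `Rat.instEncodable` that `encode q` refers to. -/
theorem encode_primcodable (q : ℚ) :
    @encode ℚ (Primcodable.ofDenumerable ℚ).toEncodable q =
      Nat.count IsEncoding (Nat.pair (encode q.num) q.den) := by
  have h : @encode ℚ (Primcodable.ofDenumerable ℚ).toEncodable q =
      @Nat.count (· ∈ Set.range (encode : ℚ → ℕ)) (decidableRangeEncode ℚ) (encode q) := rfl
  rw [h, Nat.count_eq_card_filter_range, Nat.count_eq_card_filter_range]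
  congr 1
  ext n
  simp only [mem_filter, isEncoding_iff, Set.mem_range]
  rfl

theorem computable_encode_num_den : Computable fun q : ℚ => Nat.pair (encode q.num) q.den := by
  have hex : ∀ q : ℚ, ∃ n, IsEncoding n ∧
      Nat.count IsEncoding n = @encode ℚ (Primcodable.ofDenumerable ℚ).toEncodable q :=
    fun q => ⟨_, (isEncoding_iff _).2 ⟨q, rfl⟩, (encode_primcodable q).symm⟩
  refine (Computable.find (PrimrecPred.computablePred ?_) hex).of_eq fun q => ?_
  · exact (primrecPred_isEncoding.comp Primrec.snd).and
      (Primrec.eq.comp ((Primrec.nat_count primrecPred_isEncoding).comp Primrec.snd)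
        (Primrec.encode.comp Primrec.fst))
  · obtain ⟨hcode, hcount⟩ := Nat.find_spec (hex q)
    exact Nat.count_injective hcode ((isEncoding_iff _).2 ⟨q, rfl⟩)
      (hcount.trans (encode_primcodable q))

theorem computable_num : Computable Rat.num :=
  Computable.encode_iff.1 <| (Primrec.fst.comp Primrec.unpair).to_comp.comp
    computable_encode_num_den |>.of_eq fun q => by simp

theorem computable_den : Computable Rat.den :=
  (Primrec.snd.comp Primrec.unpair).to_comp.comp computable_encode_num_den |>.of_eq
    fun q => by simp

theorem computable_of_num_den {f : α → ℚ} (hnum : Computable fun a => (f a).num)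
    (hden : Computable fun a => (f a).den) : Computable f :=
  Computable.encode_iff.1 <|
    ((Primrec.nat_count primrecPred_isEncoding).to_comp.comp
      (Primrec₂.natPair.to_comp.comp (Computable.encode.comp hnum) hden)).of_eq
    fun a => (encode_primcodable (f a)).symm

theorem le_iff_toNat (q r : ℚ) : q ≤ r ↔ q.num.toNat * r.den + (-r.num).toNat * q.den ≤
    r.num.toNat * q.den + (-q.num).toNat * r.den := by
  have hq := Int.toNat_sub_toNat_neg q.num
  have hr := Int.toNat_sub_toNat_neg r.num
  rw [Rat.le_iff]
  zify
  constructor <;> intro h <;> nlinarith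

theorem computable_le : Computable₂ fun q r : ℚ => decide (q ≤ r) := by
  have hpos : Computable fun q : ℚ => q.num.toNat := Primrec.int_toNat.to_comp.comp computable_num
  have hneg : Computable fun q : ℚ => (-q.num).toNat :=
    Primrec.int_neg_toNat.to_comp.comp computable_num
  have hcross {f g : ℚ → ℕ} (hf : Computable f) (hg : Computable g) :
      Computable fun p : ℚ × ℚ => f p.1 * g p.2 :=
    Primrec.nat_mul.to_comp.comp (hf.comp .fst) (hg.comp .snd)
  refine (Primrec.nat_le.decide.to_comp.comp
    (Primrec.nat_add.to_comp.comp (hcross hpos computable_den)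
      ((hcross computable_den hneg).of_eq fun p => Nat.mul_comm _ _))
    (Primrec.nat_add.to_comp.comp ((hcross computable_den hpos).of_eq fun p => Nat.mul_comm _ _)
      (hcross hneg computable_den))).of_eq fun p => ?_
  simp only [le_iff_toNat]

theorem computable_lt : Computable₂ fun q r : ℚ => decide (q < r) :=
  (Primrec.not.to_comp.comp (computable_le.comp Computable.snd Computable.fst)).of_eq
    fun _ => decide_not.symm.trans (decide_eq_decide.2 not_le)

end Rat

open Nat.Partrec (Code)

/-- Stage `s` in the enumeration of the set of all odd numbers and all `2 * c` such that the code
numbered `c` halts on input `0`. The odd numbers make every stage miss an element of the set and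
keep the numerators of the stage sums odd. -/
def haltingStage (s : ℕ) : Finset ℕ :=
  (range (2 * s + 2)).filter fun n =>
    n % 2 = 1 ∨ (Code.evaln s (Denumerable.ofNat Code (n / 2)) 0).isSome

theorem mem_haltingStage {s n : ℕ} : n ∈ haltingStage s ↔
    n < 2 * s + 2 ∧ (n % 2 = 1 ∨ (Code.evaln s (Denumerable.ofNat Code (n / 2)) 0).isSome) := by
  simp only [haltingStage, mem_filter, mem_range]

theorem haltingStage_mono : Monotone haltingStage := by
  intro s t hst n
  simp only [mem_haltingStage, Option.isSome_iff_exists]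
  rintro ⟨hn, hodd | ⟨x, hx⟩⟩
  · exact ⟨by omega, Or.inl hodd⟩
  · exact ⟨by omega, Or.inr ⟨x, Code.evaln_mono hst hx⟩⟩

theorem le_of_mem_haltingStage {s n : ℕ} (h : n ∈ haltingStage s) : n ≤ 2 * s + 1 := by
  have := (mem_haltingStage.1 h).1
  omega

theorem two_mul_add_one_mem_haltingStage (s : ℕ) : 2 * s + 1 ∈ haltingStage s :=
  mem_haltingStage.2 ⟨by omega, Or.inl (by omega)⟩

theorem exists_mem_haltingStage_not_mem (s : ℕ) :
    ∃ t n, n ∈ haltingStage t ∧ n ∉ haltingStage s :=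
  ⟨s + 1, 2 * s + 3, two_mul_add_one_mem_haltingStage (s + 1),
    fun h => by have := le_of_mem_haltingStage h; omega⟩

theorem primrecRel_mem_haltingStage : PrimrecRel fun s n => n ∈ haltingStage s := by
  have hhalt : Primrec fun p : ℕ × ℕ => Code.evaln p.1 (Denumerable.ofNat Code (p.2 / 2)) 0 :=
    Code.primrec_evaln.comp (((Primrec.fst).pair ((Primrec.ofNat Code).comp
      (Primrec.nat_div.comp Primrec.snd (Primrec.const 2)))).pair (Primrec.const 0))
  exact ((Primrec.nat_lt.comp Primrec.snd
    (Primrec.nat_add.comp (Primrec.nat_mul.comp (Primrec.const 2) Primrec.fst)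
      (Primrec.const 2))).and
    ((Primrec.eq.comp (Primrec.nat_mod.comp Primrec.snd (Primrec.const 2)) (Primrec.const 1)).or
      (Primrec.eq.comp (Primrec.option_isSome.comp hhalt) (Primrec.const true)))).of_eq
    fun _ => mem_haltingStage.symm

theorem exists_mem_haltingStage_iff (c : Code) :
    (∃ s, 2 * encode c ∈ haltingStage s) ↔ (Code.eval c 0).Dom := by
  have hc : Denumerable.ofNat Code (2 * encode c / 2) = c := by
    rw [Nat.mul_div_cancel_left _ two_pos, Denumerable.ofNat_encode]
  simp only [mem_haltingStage, hc, Nat.mul_mod_right, Option.isSome_iff_exists, Part.dom_iff_mem,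
    Code.evaln_complete]
  constructor
  · rintro ⟨s, -, h | ⟨x, hx⟩⟩
    · omega
    · exact ⟨x, s, hx⟩
  · rintro ⟨x, k, hk⟩
    exact ⟨k + encode c, by omega, Or.inr ⟨x, Code.evaln_mono (Nat.le_add_right _ _) hk⟩⟩

theorem not_computablePred_mem_haltingStage :
    ¬ComputablePred fun n => ∃ s, n ∈ haltingStage s := fun ⟨_, h⟩ =>
  ComputablePred.halting_problem 0 <|
    (h.comp (Primrec.nat_mul.comp (Primrec.const 2) Primrec.encode).to_comp).computablePred.of_eq
      exists_mem_haltingStage_iff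

section StageSums

def stageSum {R : Type*} [Semiring R] (U : ℕ → Finset ℕ) (c : R) (s : ℕ) : R :=
  ∑ n ∈ U s, c ^ n

noncomputable def stageLimit (U : ℕ → Finset ℕ) (c : ℝ) : ℝ := ⨆ s, stageSum U c s

theorem Rat.cast_stageSum (U : ℕ → Finset ℕ) (c : ℚ) (s : ℕ) :
    ((stageSum U c s : ℚ) : ℝ) = stageSum U (c : ℝ) s := by
  simp only [stageSum, Rat.cast_sum, Rat.cast_pow]

theorem monotone_stageSum {R : Type*} [Semiring R] [PartialOrder R] [IsOrderedRing R]
    {U : ℕ → Finset ℕ} {c : R} (hU : Monotone U) (hc0 : 0 ≤ c) : Monotone (stageSum U c) :=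
  fun _ _ hst => Finset.sum_le_sum_of_subset_of_nonneg (hU hst) fun n _ _ => pow_nonneg hc0 n

variable {U : ℕ → Finset ℕ} {c : ℝ}

theorem sum_pow_le_two_mul_pow (hc0 : 0 ≤ c) (hc : c ≤ 1 / 2) {T : Finset ℕ} {m : ℕ}
    (hT : ∀ n ∈ T, m ≤ n) : ∑ n ∈ T, c ^ n ≤ 2 * c ^ m := by
  have hinj : Set.InjOn (· - m) T := fun x hx y hy hxy => by
    have := hT x hx; have := hT y hy; simp only at hxy; omega
  have hgeom : ∑ j ∈ T.image (· - m), c ^ j ≤ 2 :=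
    calc ∑ j ∈ T.image (· - m), c ^ j ≤ ∑' j, c ^ j :=
          Summable.sum_le_tsum _ (fun j _ => pow_nonneg hc0 j)
            (summable_geometric_of_lt_one hc0 (by linarith))
      _ = (1 - c)⁻¹ := tsum_geometric_of_lt_one hc0 (by linarith)
      _ ≤ 2 := by rw [inv_le_comm₀ (by linarith) two_pos]; linarith
  calc ∑ n ∈ T, c ^ n = c ^ m * ∑ j ∈ T.image (· - m), c ^ j := by
        rw [Finset.sum_image hinj, Finset.mul_sum]
        exact Finset.sum_congr rfl fun n hn => by rw [← pow_add, Nat.add_sub_cancel' (hT n hn)]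
    _ ≤ c ^ m * 2 := mul_le_mul_of_nonneg_left hgeom (pow_nonneg hc0 m)
    _ = 2 * c ^ m := mul_comm _ _

theorem bddAbove_stageSum (hc0 : 0 ≤ c) (hc : c ≤ 1 / 2) : BddAbove (Set.range (stageSum U c)) :=
  ⟨2, by
    rintro _ ⟨s, rfl⟩
    simpa [stageSum] using sum_pow_le_two_mul_pow hc0 hc (T := U s) (m := 0) fun n _ => n.zero_le⟩

theorem stageSum_sub_stageSum (hU : Monotone U) {s t : ℕ} (hst : s ≤ t) :
    stageSum U c t - stageSum U c s = ∑ n ∈ U t \ U s, c ^ n := by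
  rw [stageSum, stageSum, ← Finset.sum_sdiff (hU hst), add_sub_cancel_right]

theorem tendsto_stageSum (hU : Monotone U) (hc0 : 0 ≤ c) (hc : c ≤ 1 / 2) :
    Tendsto (stageSum U c) atTop (𝓝 (stageLimit U c)) :=
  tendsto_atTop_ciSup (monotone_stageSum hU hc0) (bddAbove_stageSum hc0 hc)

theorem pow_le_stageLimit_sub (hU : Monotone U) (hc0 : 0 ≤ c) (hc : c ≤ 1 / 2) {s t n : ℕ}
    (ht : n ∈ U t) (hs : n ∉ U s) : c ^ n ≤ stageLimit U c - stageSum U c s := by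
  have hmax : n ∈ U (max s t) \ U s := Finset.mem_sdiff.2 ⟨hU (le_max_right s t) ht, hs⟩
  have hle : stageSum U c (max s t) ≤ stageLimit U c := le_ciSup (bddAbove_stageSum hc0 hc) _
  have := stageSum_sub_stageSum (c := c) hU (le_max_left s t)
  have := Finset.single_le_sum (fun k _ => pow_nonneg hc0 k) hmax
  linarith

theorem stageLimit_sub_le (hU : Monotone U) (hc0 : 0 ≤ c) (hc : c ≤ 1 / 2) {s m : ℕ}
    (hm : ∀ t, ∀ n ∈ U t, n ∉ U s → m ≤ n) : stageLimit U c - stageSum U c s ≤ 2 * c ^ m := by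
  refine sub_le_iff_le_add.2 (ciSup_le fun t => ?_)
  rcases le_total t s with hts | hst
  · have := monotone_stageSum hU hc0 hts
    have := pow_nonneg hc0 m
    linarith
  · have := stageSum_sub_stageSum (c := c) hU hst
    have := sum_pow_le_two_mul_pow hc0 hc (T := U t \ U s) (m := m)
      fun n hn => hm t n (Finset.mem_sdiff.1 hn).1 (Finset.mem_sdiff.1 hn).2
    linarith

/-- `m` is the least element enumerated after stage `s`; it does not depend on `c`. -/
theorem exists_stageLimit_sub_bounds (hU : Monotone U)
    (hfresh : ∀ s, ∃ t n, n ∈ U t ∧ n ∉ U s) (s : ℕ) : ∃ m : ℕ, ∀ c : ℝ, 0 ≤ c → c ≤ 1 / 2 →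
      c ^ m ≤ stageLimit U c - stageSum U c s ∧ stageLimit U c - stageSum U c s ≤ 2 * c ^ m := by
  classical
  have hex : ∃ m, ∃ t, m ∈ U t ∧ m ∉ U s := by
    obtain ⟨t, n, hn⟩ := hfresh s
    exact ⟨n, t, hn⟩
  obtain ⟨t, hmt, hms⟩ := Nat.find_spec hex
  exact ⟨Nat.find hex, fun c hc0 hc => ⟨pow_le_stageLimit_sub hU hc0 hc hmt hms,
    stageLimit_sub_le hU hc0 hc fun t n ht hs => Nat.find_min' hex ⟨t, ht, hs⟩⟩⟩

theorem exists_mem_iff_mem_of_stageLimit_sub_lt (hU : Monotone U) (hc0 : 0 ≤ c) (hc : c ≤ 1 / 2)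
    {s n : ℕ} (hsn : stageLimit U c - stageSum U c s < c ^ n) : (∃ t, n ∈ U t) ↔ n ∈ U s :=
  ⟨fun ⟨_, ht⟩ => by_contra fun hs => (pow_le_stageLimit_sub hU hc0 hc ht hs).not_gt hsn,
    fun hs => ⟨s, hs⟩⟩

theorem stageSum_lt_stageLimit (hU : Monotone U) (hfresh : ∀ s, ∃ t n, n ∈ U t ∧ n ∉ U s)
    (hc0 : 0 < c) (hc : c ≤ 1 / 2) (s : ℕ) : stageSum U c s < stageLimit U c := by
  obtain ⟨t, n, ht, hs⟩ := hfresh s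
  have := pow_le_stageLimit_sub hU hc0.le hc ht hs
  have := pow_pos hc0 n
  linarith

theorem sq_stageLimit_sub_le (hU : Monotone U) (hfresh : ∀ s, ∃ t n, n ∈ U t ∧ n ∉ U s)
    (hc0 : 0 ≤ c) (hc : c ≤ 1 / 2) (s : ℕ) :
    (stageLimit U c - stageSum U c s) ^ 2 ≤ 4 * (stageLimit U (c ^ 2) - stageSum U (c ^ 2) s) := by
  obtain ⟨m, hm⟩ := exists_stageLimit_sub_bounds hU hfresh s
  obtain ⟨hlow, hup⟩ := hm c hc0 hc
  obtain ⟨hlow2, -⟩ := hm (c ^ 2) (sq_nonneg c) (by nlinarith)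
  calc (stageLimit U c - stageSum U c s) ^ 2 ≤ (2 * c ^ m) ^ 2 :=
        pow_le_pow_left₀ ((pow_nonneg hc0 m).trans hlow) hup 2
    _ = 4 * (c ^ 2) ^ m := by ring
    _ ≤ _ := by linarith

theorem stageLimit_sub_le_sq (hU : Monotone U) (hfresh : ∀ s, ∃ t n, n ∈ U t ∧ n ∉ U s)
    (hc0 : 0 ≤ c) (hc : c ≤ 1 / 2) (s : ℕ) :
    stageLimit U (c ^ 2) - stageSum U (c ^ 2) s ≤ 2 * (stageLimit U c - stageSum U c s) ^ 2 := by
  obtain ⟨m, hm⟩ := exists_stageLimit_sub_bounds hU hfresh s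
  obtain ⟨hlow, -⟩ := hm c hc0 hc
  obtain ⟨-, hup2⟩ := hm (c ^ 2) (sq_nonneg c) (by nlinarith)
  calc stageLimit U (c ^ 2) - stageSum U (c ^ 2) s ≤ 2 * (c ^ m) ^ 2 := by
        rwa [← pow_mul, mul_comm m, pow_mul]
    _ ≤ _ := by gcongr

end StageSums

theorem sum_one_div_two_pow_pow_eq {T : Finset ℕ} {k L : ℕ} (hT : ∀ n ∈ T, n ≤ L) :
    ∑ n ∈ T, ((1 / 2 : ℚ) ^ k) ^ n = ((∑ n ∈ T, 2 ^ (k * (L - n)) : ℕ) : ℚ) / 2 ^ (k * L) := by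
  rw [eq_div_iff (by positivity), Finset.sum_mul, Nat.cast_sum]
  refine Finset.sum_congr rfl fun n hn => ?_
  rw [show k * L = k * (L - n) + k * n by rw [← mul_add, Nat.sub_add_cancel (hT n hn)]]
  rw [pow_add, mul_left_comm, ← pow_mul, ← mul_pow]
  norm_num

theorem odd_sum_two_pow {T : Finset ℕ} {k L : ℕ} (hk : 0 < k) (hL : L ∈ T)
    (hT : ∀ n ∈ T, n ≤ L) : Odd (∑ n ∈ T, 2 ^ (k * (L - n))) := by
  rw [← Finset.sum_erase_add _ _ hL, Nat.sub_self, mul_zero, pow_zero]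
  refine Even.add_one (Finset.even_sum _ fun n hn => ?_)
  have hnL : n < L := lt_of_le_of_ne (hT n (Finset.mem_of_mem_erase hn)) (Finset.ne_of_mem_erase hn)
  exact (Nat.even_pow' (Nat.mul_ne_zero hk.ne' (by omega))).2 even_two

theorem Rat.num_den_div_two_pow {N : ℕ} (hN : Odd N) (L : ℕ) :
    ((N : ℚ) / 2 ^ L).num = N ∧ ((N : ℚ) / 2 ^ L).den = 2 ^ L := by
  have hcop : (N : ℤ).natAbs.Coprime ((2 ^ L : ℕ) : ℤ).natAbs := by
    simpa using (Nat.coprime_two_right.2 hN).pow_right L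
  have hpos : (0 : ℤ) < ((2 ^ L : ℕ) : ℤ) := by positivity
  have hcast : (N : ℚ) / 2 ^ L = ((N : ℤ) : ℚ) / (((2 ^ L : ℕ) : ℤ) : ℚ) := by push_cast; rfl
  rw [hcast, Rat.num_div_eq_of_coprime hpos hcop]
  exact ⟨rfl, by exact_mod_cast Rat.den_div_eq_of_coprime hpos hcop⟩

theorem computable_stageSum_haltingStage {k : ℕ} (hk : 0 < k) :
    Computable (stageSum haltingStage ((1 / 2 : ℚ) ^ k)) := by
  set N : ℕ → ℕ := fun s => ∑ n ∈ haltingStage s, 2 ^ (k * (2 * s + 1 - n))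
  have hdiv (s : ℕ) :
      stageSum haltingStage ((1 / 2 : ℚ) ^ k) s = (N s : ℚ) / 2 ^ (k * (2 * s + 1)) :=
    sum_one_div_two_pow_pow_eq fun _ => le_of_mem_haltingStage
  have hnumden (s : ℕ) := Rat.num_den_div_two_pow
    (odd_sum_two_pow hk (two_mul_add_one_mem_haltingStage s) fun _ => le_of_mem_haltingStage)
    (k * (2 * s + 1))
  have hlen : Primrec fun s : ℕ => 2 * s + 1 :=
    Primrec.succ.comp (Primrec.nat_mul.comp (Primrec.const 2) Primrec.id)
  have hterm : Primrec₂ fun s n => if n ∈ haltingStage s then 2 ^ (k * (2 * s + 1 - n)) else 0 :=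
    Primrec.ite (primrecRel_mem_haltingStage.comp Primrec.fst Primrec.snd)
      (Primrec.nat_pow.comp (Primrec.const 2) (Primrec.nat_mul.comp (Primrec.const k)
        (Primrec.nat_sub.comp (hlen.comp Primrec.fst) Primrec.snd))) (Primrec.const 0)
  have hN : Primrec N := by
    refine ((Primrec.nat_sum_range hterm).comp Primrec.id (Primrec.succ.comp hlen)).of_eq
      fun s => ?_
    rw [id, Finset.sum_ite_mem, Finset.inter_eq_right.2 fun n hn => Finset.mem_range.2 (by
      have := le_of_mem_haltingStage hn; omega)]
  have hden : Primrec fun s : ℕ => 2 ^ (k * (2 * s + 1)) :=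
    Primrec.nat_pow.comp (Primrec.const 2) (Primrec.nat_mul.comp (Primrec.const k) hlen)
  refine Rat.computable_of_num_den ((Primrec.int_natCast.comp hN).to_comp.of_eq fun s => ?_)
    (hden.to_comp.of_eq fun s => ?_)
  · rw [hdiv, (hnumden s).1]
  · rw [hdiv, (hnumden s).2]

section Reductions

variable {α β : ℝ} {a b : ℕ → ℚ}

theorem iterate_le_of_lt_mul_sq {e : ℕ → ℝ} {T : ℕ → ℕ} {K r : ℝ} (hK : 0 < K) (hr0 : 0 ≤ r)
    (hr1 : r ≤ 1) (hT : ∀ s, e (T s) < K * e s ^ 2) (he : ∀ s, 0 ≤ e s) {s₀ : ℕ}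
    (hs₀ : e s₀ ≤ r / K) (n : ℕ) : e (T^[n] s₀) ≤ r ^ (n + 1) / K := by
  induction n with
  | zero => simpa using hs₀
  | succ n ih =>
    rw [Function.iterate_succ_apply']
    calc e (T (T^[n] s₀)) ≤ K * e (T^[n] s₀) ^ 2 := (hT _).le
      _ ≤ K * (r ^ (n + 1) / K) ^ 2 := by gcongr; exact he _
      _ = r ^ n * (r ^ (n + 2) / K) := by field_simp; ring
      _ ≤ r ^ (n + 2) / K := mul_le_of_le_one_left (by positivity) (pow_le_one₀ hr0 hr1)

theorem qsRed_of_pow_sub_le (ha : Computable a) (hb : Computable b)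
    (ha_lt : ∀ s, (a s : ℝ) < α) (hb_lim : Tendsto (fun s => (b s : ℝ)) atTop (𝓝 β))
    {d l : ℕ} (hd : 0 < d) (hl : 0 < l) (hab : ∀ s, (α - a s) ^ l ≤ d * (β - b s)) :
    QSRed α β := by
  have hf : Partrec fun q : ℚ => (Nat.rfind fun s => decide (q < b s)).map a :=
    (Partrec.rfind (Rat.computable_lt.comp .fst (hb.comp .snd)).to₂.partrec₂).map
      (ha.comp .snd).to₂
  refine ⟨_, hf, d, l, hd, hl, fun q hq => ?_⟩
  obtain ⟨s, hs⟩ := (hb_lim.eventually (lt_mem_nhds hq)).exists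
  obtain ⟨t, ht, -⟩ := Nat.rfind_min' (p := fun s => decide (q < b s)) (m := s)
    (decide_eq_true (by exact_mod_cast hs))
  have hqt : (q : ℝ) < b t := by
    exact_mod_cast of_decide_eq_true (Part.mem_some_iff.1 (Nat.rfind_spec ht)).symm
  refine ⟨a t, Part.mem_map a ht, ha_lt t, (hab t).trans_lt ?_⟩
  gcongr

theorem SRed.exists_computable_step (h : SRed α β) (ha : Computable a) (hb : Computable b)
    (ha_lim : Tendsto (fun s => (a s : ℝ)) atTop (𝓝 α)) (hb_lt : ∀ s, (b s : ℝ) < β) :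
    ∃ d : ℕ, 0 < d ∧ ∃ T : ℕ → ℕ, Computable T ∧ ∀ s, α - a (T s) < d * (β - b s) := by
  obtain ⟨f, hf, d, hd, H⟩ := h
  choose y hyf hyα hyd using fun s => H (b s) (hb_lt s)
  have hy : Computable y := (hf.comp hb).of_eq_tot hyf
  have hex (s : ℕ) : ∃ t, y s ≤ a t := by
    obtain ⟨t, ht⟩ := (ha_lim.eventually (lt_mem_nhds (hyα s))).exists
    exact ⟨t, by exact_mod_cast ht.le⟩
  refine ⟨d, hd, fun s => Nat.find (hex s),
    Computable.find (Rat.computable_le.comp (hy.comp Computable.fst)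
      (ha.comp Computable.snd)).computablePred hex, fun s => ?_⟩
  have : (y s : ℝ) ≤ a (Nat.find (hex s)) := by exact_mod_cast Nat.find_spec (hex s)
  linarith [hyd s]

/-- Each use of the reduction squares the error of the approximation of `α` up to the factor `K`,
so iterating it from a stage with error below `r / K` gives the modulus. -/
theorem SRed.exists_computable_modulus (h : SRed α β) (ha : Computable a) (hb : Computable b)
    (ha_le : ∀ s, (a s : ℝ) ≤ α) (ha_lim : Tendsto (fun s => (a s : ℝ)) atTop (𝓝 α))
    (hb_lt : ∀ s, (b s : ℝ) < β) {C : ℝ} (hC : 0 ≤ C)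
    (hba : ∀ s, β - b s ≤ C * (α - a s) ^ 2)
    {r : ℝ} (hr0 : 0 < r) (hr1 : r < 1) :
    ∃ S : ℕ → ℕ, Computable S ∧ ∀ n, α - a (S n) < r ^ n := by
  obtain ⟨d, hd, T, hT, hTlt⟩ := h.exists_computable_step ha hb ha_lim hb_lt
  set K : ℝ := d * C + 1 with hK_def
  have hK : 1 ≤ K := by
    have : (0 : ℝ) ≤ d * C := by positivity
    linarith
  have hstep (s : ℕ) : α - a (T s) < K * (α - a s) ^ 2 :=
    calc α - a (T s) < d * (β - b s) := hTlt s
      _ ≤ d * (C * (α - a s) ^ 2) := by gcongr; exact hba s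
      _ ≤ K * (α - a s) ^ 2 := by
        rw [hK_def, add_mul, one_mul, mul_assoc]
        exact le_add_of_nonneg_right (sq_nonneg _)
  have hε : 0 < r / K := by positivity
  obtain ⟨s₀, hs₀⟩ := (ha_lim.eventually (lt_mem_nhds (sub_lt_self α hε))).exists
  refine ⟨fun n => T^[n] s₀, ?_, fun n => ?_⟩
  · exact (Computable.nat_rec Computable.id (Computable.const s₀)
      (hT.comp (Computable.snd.comp Computable.snd)).to₂).of_eq fun n => by
        induction n with
        | zero => rfl
        | succ n ih => simp [Function.iterate_succ_apply', ← ih]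
  · calc α - a (T^[n] s₀) ≤ r ^ (n + 1) / K :=
          iterate_le_of_lt_mul_sq (e := fun s => α - a s) (by positivity) hr0.le hr1.le hstep
            (fun s => sub_nonneg.2 (ha_le s)) (sub_le_comm.1 hs₀.le) n
      _ = r ^ n * (r / K) := by ring
      _ < r ^ n * 1 := by gcongr; exact (div_le_self hr0.le hK).trans_lt hr1
      _ = r ^ n := mul_one _

end Reductions

section StageLimits

variable {U : ℕ → Finset ℕ} {c : ℚ}

theorem compApproxSeq_stageSum (hU : Monotone U) (hc0 : 0 ≤ c) (hc : c ≤ 1 / 2)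
    (hcomp : Computable (stageSum U c)) : CompApproxSeq (stageLimit U c) (stageSum U c) := by
  refine ⟨hcomp, monotone_stageSum hU hc0, ?_⟩
  simp only [Rat.cast_stageSum]
  exact tendsto_stageSum hU (by exact_mod_cast hc0) ((Rat.cast_le.2 hc).trans_eq (by norm_num))

theorem qsRed_stageLimit_sq (hU : Monotone U) (hfresh : ∀ s, ∃ t n, n ∈ U t ∧ n ∉ U s)
    (hc0 : 0 < c) (hc : c ≤ 1 / 2) (ha : Computable (stageSum U c))
    (hb : Computable (stageSum U (c ^ 2))) :
    QSRed (stageLimit U c) (stageLimit U (c ^ 2 : ℚ)) := by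
  have hc0' : (0 : ℝ) < c := by exact_mod_cast hc0
  have hc' : (c : ℝ) ≤ 1 / 2 := (Rat.cast_le.2 hc).trans_eq (by norm_num)
  refine qsRed_of_pow_sub_le ha hb (fun s => ?_) ?_ (d := 4) (l := 2) four_pos two_pos fun s => ?_
  · rw [Rat.cast_stageSum]
    exact stageSum_lt_stageLimit hU hfresh hc0' hc' s
  · simp only [Rat.cast_stageSum]
    exact tendsto_stageSum hU (by positivity) (by push_cast; nlinarith)
  · simp only [Rat.cast_stageSum, Rat.cast_pow]
    exact_mod_cast sq_stageLimit_sub_le hU hfresh hc0'.le hc' s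

theorem computablePred_of_sRed_stageLimit_sq (hU : Monotone U)
    (hfresh : ∀ s, ∃ t n, n ∈ U t ∧ n ∉ U s) (hmem : PrimrecRel fun s n => n ∈ U s)
    (hc0 : 0 < c) (hc : c ≤ 1 / 2) (ha : Computable (stageSum U c))
    (hb : Computable (stageSum U (c ^ 2)))
    (h : SRed (stageLimit U c) (stageLimit U (c ^ 2 : ℚ))) :
    ComputablePred fun n => ∃ s, n ∈ U s := by
  have hc0' : (0 : ℝ) < c := by exact_mod_cast hc0
  have hc' : (c : ℝ) ≤ 1 / 2 := (Rat.cast_le.2 hc).trans_eq (by norm_num)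
  obtain ⟨S, hS, hmod⟩ := h.exists_computable_modulus ha hb
    (fun s => by rw [Rat.cast_stageSum]; exact (stageSum_lt_stageLimit hU hfresh hc0' hc' s).le)
    (by simp only [Rat.cast_stageSum]; exact tendsto_stageSum hU hc0'.le hc')
    (fun s => by
      simp only [Rat.cast_stageSum, Rat.cast_pow]
      exact stageSum_lt_stageLimit hU hfresh (by positivity) (by nlinarith) s)
    (C := 2) zero_le_two
    (fun s => by
      simp only [Rat.cast_stageSum, Rat.cast_pow]
      exact stageLimit_sub_le_sq hU hfresh hc0'.le hc' s)
    hc0' (by linarith)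
  refine (hmem.decide.to_comp.comp hS Computable.id).computablePred.of_eq fun n => ?_
  have := hmod n
  rw [Rat.cast_stageSum] at this
  exact (exists_mem_iff_mem_of_stageLimit_sub_lt hU hc0'.le hc' this).symm

end StageLimits

/-- Quasi Solovay reducibility does not imply Solovay reducibility: there are
left-c.e. reals `α ≤_qS β` with `¬ α ≤_S β`. -/
theorem stmt8 : ∃ α β : ℝ, LeftCE α ∧ LeftCE β ∧ QSRed α β ∧ ¬ SRed α β := by
  have hhalf : (0 : ℚ) < 1 / 2 := by norm_num
  have ha : Computable (stageSum haltingStage (1 / 2 : ℚ)) := by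
    simpa using computable_stageSum_haltingStage one_pos
  have hb : Computable (stageSum haltingStage ((1 / 2 : ℚ) ^ 2)) :=
    computable_stageSum_haltingStage two_pos
  refine ⟨_, _, ⟨_, compApproxSeq_stageSum haltingStage_mono hhalf.le le_rfl ha⟩,
    ⟨_, compApproxSeq_stageSum haltingStage_mono (by positivity) (by norm_num) hb⟩,
    qsRed_stageLimit_sq haltingStage_mono exists_mem_haltingStage_not_mem hhalf le_rfl ha hb,
    fun h => not_computablePred_mem_haltingStage ?_⟩
  exact computablePred_of_sRed_stageLimit_sq haltingStage_mono exists_mem_haltingStage_not_mem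
    primrecRel_mem_haltingStage hhalf le_rfl ha hb h
end
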